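/- Let d ≥ 1 and let Γ be a symmetric d×d real matrix. For each k ∈ {1,…,d} define the d×d matrix Σ̃^(k) entrywise by Σ̃^(k)_{ij} = (Γ_{ik} + Γ_{jk} − Γ_{ij})/2, and define Σ := −(1/2)(I − 𝟏𝟏ᵀ/d) Γ (I − 𝟏𝟏ᵀ/d). Then (1/d)·Σ_{k=1}^d Σ̃^(k) = Σ + (𝟏ᵀΓ𝟏/(2d²))·𝟏𝟏ᵀ. -/

import Mathlib

/-!
Double centering by `I - 𝟏𝟏ᵀ/d` turns `Γ i j` into `Γ i j - c j / d - r i / d + S / d²`, where `r`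
and `c` are the row and column sums of `Γ` and `S` its total sum, while averaging `Σ̃^(k)` over `k`
gives `(r i + r j - d Γ i j) / (2d)`. Symmetry gives `r j = c j`, so the two sides differ by the
constant `S / (2d²)`.
-/

open Matrix

noncomputable section

/-- The d×d all-ones matrix 𝟏𝟏ᵀ. -/
def allOnes (d : ℕ) : Matrix (Fin d) (Fin d) ℝ := Matrix.of fun _ _ => (1 : ℝ)

lemma allOnes_mul_apply {d : ℕ} (A : Matrix (Fin d) (Fin d) ℝ) (i j : Fin d) :
    (allOnes d * A) i j = ∑ k, A k j := by
  simp [allOnes, mul_apply]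

lemma mul_allOnes_apply {d : ℕ} (A : Matrix (Fin d) (Fin d) ℝ) (i j : Fin d) :
    (A * allOnes d) i j = ∑ k, A i k := by
  simp [allOnes, mul_apply]

lemma allOnes_mul_mul_allOnes_apply {d : ℕ} (A : Matrix (Fin d) (Fin d) ℝ) (i j : Fin d) :
    (allOnes d * A * allOnes d) i j = ∑ k, ∑ l, A k l := by
  simp only [mul_allOnes_apply, allOnes_mul_apply]
  exact Finset.sum_comm

lemma sub_smul_allOnes_mul_mul_sub_smul_allOnes_apply {d : ℕ} (c : ℝ)
    (A : Matrix (Fin d) (Fin d) ℝ) (i j : Fin d) :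
    ((1 - c • allOnes d) * A * (1 - c • allOnes d)) i j =
      A i j - c * ∑ k, A k j - c * ∑ k, A i k + c ^ 2 * ∑ k, ∑ l, A k l := by
  have hexpand : (1 - c • allOnes d) * A * (1 - c • allOnes d) =
      A - c • (allOnes d * A) - c • (A * allOnes d) + c ^ 2 • (allOnes d * A * allOnes d) := by
    simp only [sub_mul, mul_sub, one_mul, mul_one, smul_mul_assoc, mul_smul_comm,
      Matrix.mul_assoc]
    module
  rw [hexpand, Matrix.add_apply, Matrix.smul_apply, allOnes_mul_mul_allOnes_apply]
  simp only [Matrix.sub_apply, Matrix.smul_apply, smul_eq_mul, allOnes_mul_apply,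
    mul_allOnes_apply]

theorem extreme_glasso_stmt2_general (d : ℕ)
    (Γ : Matrix (Fin d) (Fin d) ℝ) (hΓ : Γ.IsSymm)
    (Sigt : Fin d → Matrix (Fin d) (Fin d) ℝ)
    (hSigt : ∀ k i j, Sigt k i j = (Γ i k + Γ j k - Γ i j) / 2)
    (Sig : Matrix (Fin d) (Fin d) ℝ)
    (hSig : Sig = (-(1/2 : ℝ)) •
      ((1 - (d : ℝ)⁻¹ • allOnes d) * Γ * (1 - (d : ℝ)⁻¹ • allOnes d))) :
    (1 / (d : ℝ)) • ∑ k, Sigt k =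
      Sig + ((∑ i, ∑ j, Γ i j) / (2 * (d : ℝ) ^ 2)) • allOnes d := by
  ext i j
  have hd : (d : ℝ) ≠ 0 := Nat.cast_ne_zero.mpr (Fin.pos i).ne'
  have hsum_Sigt : (∑ k, Sigt k) i j = (∑ k, Γ i k + ∑ k, Γ k j - d * Γ i j) / 2 := by
    simp only [Matrix.sum_apply, hSigt, ← Finset.sum_div, Finset.sum_sub_distrib,
      Finset.sum_add_distrib, Finset.sum_const, Finset.card_univ, Fintype.card_fin, nsmul_eq_mul,
      ← hΓ.apply j]
  rw [hSig, Matrix.add_apply, Matrix.smul_apply, Matrix.smul_apply, Matrix.smul_apply,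
    hsum_Sigt, sub_smul_allOnes_mul_mul_sub_smul_allOnes_apply]
  simp only [allOnes, of_apply, smul_eq_mul]
  field_simp
  ring

/-- Intermediate identity in the proof of Proposition 3.2:
(1/d)·Σ_k Σ̃^(k) = Σ + (𝟏ᵀΓ𝟏/(2d²))·𝟏𝟏ᵀ. -/
theorem extreme_glasso_stmt2 (d : ℕ) (hd : 1 ≤ d)
    (Γ : Matrix (Fin d) (Fin d) ℝ) (hΓ : Γ.IsSymm)
    (Sigt : Fin d → Matrix (Fin d) (Fin d) ℝ)
    (hSigt : ∀ k i j, Sigt k i j = (Γ i k + Γ j k - Γ i j) / 2)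
    (Sig : Matrix (Fin d) (Fin d) ℝ)
    (hSig : Sig = (-(1/2 : ℝ)) •
      ((1 - (d : ℝ)⁻¹ • allOnes d) * Γ * (1 - (d : ℝ)⁻¹ • allOnes d))) :
    (1 / (d : ℝ)) • ∑ k, Sigt k =
      Sig + ((∑ i, ∑ j, Γ i j) / (2 * (d : ℝ) ^ 2)) • allOnes d :=
  extreme_glasso_stmt2_general d Γ hΓ Sigt hSigt Sig hSig
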